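/- The second differential of ln f_{ki} for the mixture SUR model equals d² ln f_{ki} = −(dπ)'a_k a_k' dπ − (dβ)'X_i Σ_k^{-1} X_i' dβ − (dθ_k)'F_{ki}' X_i' dβ − (dβ)'X_i F_{ki} dθ_k − (dθ_k)' C_{ki} dθ_k, where F_{ki} = [Σ_k^{-1}, (b_{ki}' ⊗ Σ_k^{-1})G] and C_{ki} is the 2×2 block matrix with blocks Σ_k^{-1}, (b_{ki}' ⊗ Σ_k^{-1})G, G'(b_{ki} ⊗ Σ_k^{-1}), and (1/2)G'[(Σ_k^{-1} − 2B_{ki}) ⊗ Σ_k^{-1}]G. -/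

import Mathlib

open Matrix MeasureTheory
open scoped BigOperators Kronecker

noncomputable section

/-- Density of the multivariate Gaussian distribution `N(μ, S)` evaluated at `y`. -/
def gpdf {n : Type*} [Fintype n] [DecidableEq n] (y μ : n → ℝ) (S : Matrix n n ℝ) : ℝ :=
  (2 * Real.pi) ^ (-(Fintype.card n : ℝ) / 2) * S.det ^ (-(1 : ℝ) / 2) *
    Real.exp (-(1 / 2) * ((y - μ) ⬝ᵥ (S⁻¹ *ᵥ (y - μ))))

/-- Index type for the half-vectorization of a `D × D` matrix. -/
abbrev lowIdx (D : ℕ) := {p : Fin D × Fin D // p.2 ≤ p.1}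

/-- Half-vectorization `v(M)` of a square matrix. -/
def vech {D : ℕ} (M : Matrix (Fin D) (Fin D) ℝ) : lowIdx D → ℝ := fun p => M p.1.1 p.1.2

/-- Vectorization `vec(M)` of a square matrix (indexed by pairs). -/
def vecM {D : ℕ} (M : Matrix (Fin D) (Fin D) ℝ) : Fin D × Fin D → ℝ := fun q => M q.1 q.2

/-- The duplication matrix `G`, satisfying `vec S = G *ᵥ vech S` for symmetric `S`. -/
def dup (D : ℕ) : Matrix (Fin D × Fin D) (lowIdx D) ℝ :=
  Matrix.of fun q p =>
    if (q.1 = p.1.1 ∧ q.2 = p.1.2) ∨ (q.1 = p.1.2 ∧ q.2 = p.1.1) then (1 : ℝ) else 0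

/-- The symmetric matrix with prescribed half-vectorization. -/
def unvech {D : ℕ} (v : lowIdx D → ℝ) : Matrix (Fin D) (Fin D) ℝ :=
  Matrix.of fun i j => if h : j ≤ i then v ⟨(i, j), h⟩ else v ⟨(j, i), le_of_not_ge h⟩

/-- The matrix `b' ⊗ A` (of size `D × D²`), acting on vectorized matrices by
`(kronRow b A) *ᵥ vec S = A * Sᵀ * b`. -/
def kronRow {D : ℕ} (b : Fin D → ℝ) (A : Matrix (Fin D) (Fin D) ℝ) :
    Matrix (Fin D) (Fin D × Fin D) ℝ :=
  Matrix.of fun i q => b q.1 * A i q.2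

/-- The continuous linear map `v ↦ g ⬝ᵥ v`. -/
def dotCLM {n : ℕ} (g : Fin n → ℝ) : (Fin n → ℝ) →L[ℝ] ℝ :=
  ∑ j, g j • ContinuousLinearMap.proj j

/-- Full weight vector of a `K+1`-component mixture with free parameters `p`. -/
def piFull {K : ℕ} (p : Fin K → ℝ) : Fin (K + 1) → ℝ :=
  fun k => if h : (k : ℕ) < K then p ⟨k, h⟩ else 1 - ∑ j, p j

/-- The vectors `a_k`: `(1/π_k) e_k` for `k < K` and `-(1/π_K) 1` for `k = K`. -/
def avec {K : ℕ} (p : Fin K → ℝ) (k : Fin (K + 1)) : Fin K → ℝ :=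
  if h : (k : ℕ) < K then (fun j => if j = (⟨k, h⟩ : Fin K) then (p ⟨k, h⟩)⁻¹ else 0)
  else fun _ => -(1 - ∑ j, p j)⁻¹

open scoped Topology

/-!
Along the line `t ↦ (π + t dπ, β + t dβ, λ + t dλ, Σ + t U)` the log-density splits as
`log (π_k (1 + t a_k'dπ)) + const - ½ log det (Σ + tU) - ½ r(t)'(Σ + tU)⁻¹ r(t)` with the affine
residual `r(t) = r - t (dλ + X'dβ)`. The first two derivatives of the last two terms follow from
Jacobi's formula `(log det)' = tr (Σ⁻¹ U)` and `(Σ⁻¹)' = -Σ⁻¹ U Σ⁻¹`. Writing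
`b = Σ⁻¹ r`, the result is `-(a_k'dπ)² + ½ tr (Σ⁻¹UΣ⁻¹U) - u'Σ⁻¹u - 2u'Σ⁻¹Ub - b'UΣ⁻¹Ub` with
`u = dλ + X'dβ`, and the block matrices `F` and `C` are exactly a regrouping of this quadratic
form through `vec U = G v(U)`, `(b' ⊗ Σ⁻¹) vec U = Σ⁻¹ U b` and
`vec(U)'(M ⊗ Σ⁻¹) vec U = tr (U Σ⁻¹ U M')`.
-/

section MatrixCalculus

variable {𝕜 : Type*} [NontriviallyNormedField 𝕜] {m n : Type*} [Fintype n] {s : 𝕜}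

theorem HasDerivAt.matrix_entry {M : 𝕜 → Matrix m n 𝕜} {M' : Matrix m n 𝕜}
    (hM : HasDerivAt M M' s) (i : m) (j : n) : HasDerivAt (fun t => M t i j) (M' i j) s :=
  hasDerivAt_pi.1 (hasDerivAt_pi.1 hM i) j

theorem HasDerivAt.dotProduct {v w : 𝕜 → n → 𝕜} {v' w' : n → 𝕜} (hv : HasDerivAt v v' s)
    (hw : HasDerivAt w w' s) : HasDerivAt (fun t => v t ⬝ᵥ w t) (v' ⬝ᵥ w s + v s ⬝ᵥ w') s := by
  have := HasDerivAt.fun_sum fun i (_ : i ∈ Finset.univ) =>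
    (hasDerivAt_pi.1 hv i).fun_mul (hasDerivAt_pi.1 hw i)
  simp only [Finset.sum_add_distrib] at this
  exact this

theorem HasDerivAt.mulVec {M : 𝕜 → Matrix m n 𝕜} {w : 𝕜 → n → 𝕜} {M' : Matrix m n 𝕜}
    {w' : n → 𝕜} (hM : HasDerivAt M M' s) (hw : HasDerivAt w w' s) :
    HasDerivAt (fun t => M t *ᵥ w t) (M' *ᵥ w s + M s *ᵥ w') s :=
  hasDerivAt_pi.2 fun i => (hasDerivAt_pi.1 hM i).dotProduct hw

theorem HasDerivAt.matrix_trace {M : 𝕜 → Matrix n n 𝕜} {M' : Matrix n n 𝕜}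
    (hM : HasDerivAt M M' s) : HasDerivAt (fun t => (M t).trace) M'.trace s :=
  HasDerivAt.fun_sum fun i _ => hM.matrix_entry i i

theorem HasDerivAt.matrix_mul {M N : 𝕜 → Matrix n n 𝕜} {M' N' : Matrix n n 𝕜}
    (hM : HasDerivAt M M' s) (hN : HasDerivAt N N' s) :
    HasDerivAt (fun t => M t * N t) (M' * N s + M s * N') s :=
  hasDerivAt_pi.2 fun i => hasDerivAt_pi.2 fun j =>
    (hasDerivAt_pi.1 hM i).dotProduct (hasDerivAt_pi.2 fun k => hN.matrix_entry k j)

theorem HasDerivAt.matrix_mul_const {M : 𝕜 → Matrix m n 𝕜} {M' : Matrix m n 𝕜}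
    (hM : HasDerivAt M M' s) (U : Matrix n n 𝕜) : HasDerivAt (fun t => M t * U) (M' * U) s :=
  hasDerivAt_pi.2 fun i => hasDerivAt_pi.2 fun j =>
    ((hasDerivAt_pi.1 hM i).dotProduct (hasDerivAt_const s fun k => U k j)).congr_deriv
      (by simp [mul_apply'])

theorem hasDerivAt_matrix_add_smul (A U : Matrix m n 𝕜) (s : 𝕜) :
    HasDerivAt (fun t => A + t • U) U s :=
  hasDerivAt_pi.2 fun i => hasDerivAt_pi.2 fun j => by
    simpa using ((hasDerivAt_id s).mul_const (U i j)).const_add (A i j)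

variable [DecidableEq n]

theorem continuous_det_add_smul (A U : Matrix n n 𝕜) :
    Continuous fun t : 𝕜 => (A + t • U).det := by
  fun_prop

theorem eventually_det_add_smul_ne_zero {A : Matrix n n 𝕜} (hA : A.det ≠ 0) (U : Matrix n n 𝕜) :
    ∀ᶠ t in 𝓝 (0 : 𝕜), (A + t • U).det ≠ 0 :=
  (continuous_det_add_smul A U).continuousAt.eventually_ne (by simpa using hA)

theorem hasDerivAt_det_one_add_smul (M : Matrix n n 𝕜) :
    HasDerivAt (fun t : 𝕜 => (1 + t • M).det) M.trace 0 := by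
  simp_rw [det_one_add_smul _ M]
  set q := (det (1 + (Polynomial.X : Polynomial 𝕜) • M.map Polynomial.C)).divX.divX
  have := (((hasDerivAt_id (0 : 𝕜)).const_mul M.trace).const_add 1).fun_add
    ((q.hasDerivAt 0).fun_mul (hasDerivAt_pow 2 (0 : 𝕜)))
  exact this.congr_deriv (by simp)

theorem hasDerivAt_det_add_smul (A U : Matrix n n 𝕜) (hdet : (A + s • U).det ≠ 0) :
    HasDerivAt (fun t => (A + t • U).det) ((A + s • U).det * ((A + s • U)⁻¹ * U).trace) s := by
  set B := A + s • U
  have hB : IsUnit B.det := isUnit_iff_ne_zero.2 hdet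
  have hfactor : ∀ t, (A + t • U).det = B.det * (1 + (t - s) • (B⁻¹ * U)).det := fun t => by
    rw [← det_mul, mul_add, mul_one, mul_smul_comm, ← Matrix.mul_assoc, mul_nonsing_inv _ hB,
      Matrix.one_mul, sub_smul]
    congr 1
    simp only [B]
    abel
  simp_rw [hfactor]
  have h1 : HasDerivAt (fun t : 𝕜 => (1 + t • (B⁻¹ * U)).det) (B⁻¹ * U).trace (s - s) := by
    rw [sub_self]
    exact hasDerivAt_det_one_add_smul _
  exact (h1.comp_sub_const s s).const_mul B.det

end MatrixCalculus

section MatrixInverse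

/- Matrices carry no global norm. The operator norm chosen here only serves to invoke
`hasFDerivAt_ringInverse`; it induces the product topology, so the statement is unaffected. -/
attribute [local instance] Matrix.linftyOpNormedAddCommGroup Matrix.linftyOpNormedRing
  Matrix.linftyOpNormedAlgebra

theorem HasDerivAt.matrix_inv {n : Type*} [Fintype n] [DecidableEq n] {s : ℝ}
    {M : ℝ → Matrix n n ℝ} {M' : Matrix n n ℝ} (hM : HasDerivAt M M' s) (hdet : (M s).det ≠ 0) :
    HasDerivAt (fun t => (M t)⁻¹) (-((M s)⁻¹ * M' * (M s)⁻¹)) s := by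
  obtain ⟨u, hu⟩ := (isUnit_iff_isUnit_det _).2 (isUnit_iff_ne_zero.2 hdet)
  have hinv := hasFDerivAt_ringInverse (𝕜 := ℝ) u
  rw [hu] at hinv
  have := hinv.comp_hasDerivAt s hM
  simp only [_root_.neg_apply, ContinuousLinearMap.mulLeftRight_apply] at this
  simp only [nonsing_inv_eq_ringInverse, ← hu, Ring.inverse_unit]
  exact this

end MatrixInverse

section SecondDeriv

variable {𝕜 : Type*} [NontriviallyNormedField 𝕜] {F : Type*} [NormedAddCommGroup F]
  [NormedSpace 𝕜 F]

/-- Unlike `iteratedDeriv 2 f x = f''`, which holds with junk values when `f` is not twice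
differentiable, this is closed under sums and local changes of `f`. -/
def HasSecondDerivAt (f : 𝕜 → F) (f'' : F) (x : 𝕜) : Prop :=
  ∃ f' : 𝕜 → F, (∀ᶠ t in 𝓝 x, HasDerivAt f (f' t) t) ∧ HasDerivAt f' f'' x

variable {f g : 𝕜 → F} {f'' g'' : F} {x : 𝕜}

theorem HasSecondDerivAt.iteratedDeriv_two_eq (h : HasSecondDerivAt f f'' x) :
    iteratedDeriv 2 f x = f'' := by
  obtain ⟨f', hf, hf'⟩ := h
  have hderiv : deriv f =ᶠ[𝓝 x] f' := hf.mono fun t ht => ht.deriv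
  rw [iteratedDeriv_succ, iteratedDeriv_one, hderiv.deriv_eq, hf'.deriv]

theorem HasSecondDerivAt.congr_of_eventuallyEq (h : HasSecondDerivAt f f'' x)
    (hg : g =ᶠ[𝓝 x] f) : HasSecondDerivAt g f'' x := by
  obtain ⟨f', hf, hf'⟩ := h
  refine ⟨f', ?_, hf'⟩
  filter_upwards [hf, hg.eventually_nhds] with t ht hgt
  exact ht.congr_of_eventuallyEq hgt

theorem HasSecondDerivAt.congr_value (h : HasSecondDerivAt f f'' x) (hg : f'' = g'') :
    HasSecondDerivAt f g'' x :=
  hg ▸ h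

theorem HasSecondDerivAt.add (hf : HasSecondDerivAt f f'' x) (hg : HasSecondDerivAt g g'' x) :
    HasSecondDerivAt (fun t => f t + g t) (f'' + g'') x := by
  obtain ⟨f', hf, hf'⟩ := hf
  obtain ⟨g', hg, hg'⟩ := hg
  refine ⟨fun t => f' t + g' t, ?_, hf'.add hg'⟩
  filter_upwards [hf, hg] with t hft hgt
  exact hft.add hgt

theorem HasSecondDerivAt.const_add (c : F) (hf : HasSecondDerivAt f f'' x) :
    HasSecondDerivAt (fun t => c + f t) f'' x := by
  obtain ⟨f', hf, hf'⟩ := hf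
  exact ⟨f', hf.mono fun t ht => ht.const_add c, hf'⟩

theorem HasSecondDerivAt.const_mul (c : 𝕜) {f : 𝕜 → 𝕜} {f'' : 𝕜}
    (hf : HasSecondDerivAt f f'' x) : HasSecondDerivAt (fun t => c * f t) (c * f'') x := by
  obtain ⟨f', hf, hf'⟩ := hf
  exact ⟨fun t => c * f' t, hf.mono fun t ht => ht.const_mul c, hf'.const_mul c⟩

end SecondDeriv

theorem eventually_one_add_mul_ne_zero (a : ℝ) : ∀ᶠ t in 𝓝 (0 : ℝ), 1 + t * a ≠ 0 :=
  (by fun_prop : Continuous fun t : ℝ => 1 + t * a).continuousAt.eventually_ne (by simp)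

theorem hasSecondDerivAt_log_mul_one_add {c : ℝ} (hc : c ≠ 0) (a : ℝ) :
    HasSecondDerivAt (fun t => Real.log (c * (1 + t * a))) (-a ^ 2) 0 := by
  have hline : ∀ s : ℝ, HasDerivAt (fun t => 1 + t * a) a s := fun s => by
    simpa using (hasDerivAt_mul_const a).const_add 1
  refine ⟨fun t => a / (1 + t * a), ?_, ?_⟩
  · filter_upwards [eventually_one_add_mul_ne_zero a] with t ht
    exact (((hline t).const_mul c).log (mul_ne_zero hc ht)).congr_deriv (by field_simp)
  · exact ((hasDerivAt_const (0 : ℝ) a).fun_div (hline 0) (by simp)).congr_deriv (by ring)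

theorem Matrix.IsSymm.dotProduct_mulVec {α n : Type*} [CommSemiring α] [Fintype n]
    {A : Matrix n n α} (hA : A.IsSymm) (x y : n → α) : x ⬝ᵥ A *ᵥ y = (A *ᵥ x) ⬝ᵥ y := by
  rw [Matrix.dotProduct_mulVec, ← mulVec_transpose, hA.eq]

theorem dotProduct_mul_mulVec {α l m n : Type*} [CommSemiring α] [Fintype l] [Fintype m]
    [Fintype n] (x : l → α) (A : Matrix l m α) (B : Matrix m n α) (y : n → α) :
    x ⬝ᵥ (A * B) *ᵥ y = (Aᵀ *ᵥ x) ⬝ᵥ B *ᵥ y := by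
  rw [← mulVec_mulVec, Matrix.dotProduct_mulVec, mulVec_transpose]

theorem sumElim_dotProduct_fromBlocks_mulVec {α m n : Type*} [CommRing α] [Fintype m]
    [Fintype n] (A : Matrix m m α) (K : Matrix m n α) (Q : Matrix n n α) (x : m → α)
    (z : n → α) :
    Sum.elim x z ⬝ᵥ fromBlocks A K Kᵀ Q *ᵥ Sum.elim x z
      = x ⬝ᵥ A *ᵥ x + 2 * (x ⬝ᵥ K *ᵥ z) + z ⬝ᵥ Q *ᵥ z := by
  rw [fromBlocks_mulVec, Sum.elim_comp_inl, Sum.elim_comp_inr, sumElim_dotProduct_sumElim,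
    dotProduct_add, dotProduct_add, Matrix.dotProduct_mulVec z, vecMul_transpose,
    dotProduct_comm (K *ᵥ z)]
  ring

section GaussianDensity

variable {n : Type*} [Fintype n] [DecidableEq n]

theorem Matrix.PosDef.isSymm_inv {S : Matrix n n ℝ} (hS : S.PosDef) : S⁻¹.IsSymm :=
  isHermitian_iff_isSymm.1 hS.inv.isHermitian

theorem eventually_det_add_smul_pos {A : Matrix n n ℝ} (hA : 0 < A.det) (U : Matrix n n ℝ) :
    ∀ᶠ t in 𝓝 (0 : ℝ), 0 < (A + t • U).det :=
  continuousAt_const.eventually_lt (continuous_det_add_smul A U).continuousAt (by simpa using hA)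

theorem hasSecondDerivAt_log_det_add_smul {A : Matrix n n ℝ} (hA : A.det ≠ 0)
    (U : Matrix n n ℝ) :
    HasSecondDerivAt (fun t : ℝ => Real.log (A + t • U).det) (-(A⁻¹ * U * A⁻¹ * U).trace) 0 := by
  refine ⟨fun s => ((A + s • U)⁻¹ * U).trace, ?_, ?_⟩
  · filter_upwards [eventually_det_add_smul_ne_zero hA U] with s hs
    exact ((hasDerivAt_det_add_smul A U hs).log hs).congr_deriv (by field_simp)
  · have hinv := (hasDerivAt_matrix_add_smul A U 0).matrix_inv (by simpa using hA)
    exact ((hinv.matrix_mul_const U).matrix_trace).congr_deriv (by simp)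

theorem hasSecondDerivAt_dotProduct_inv_mulVec {A : Matrix n n ℝ} (hA : A.det ≠ 0)
    (U : Matrix n n ℝ) (r u : n → ℝ) :
    HasSecondDerivAt (fun t : ℝ => (r - t • u) ⬝ᵥ ((A + t • U)⁻¹ *ᵥ (r - t • u)))
      (2 * (u ⬝ᵥ A⁻¹ *ᵥ u + u ⬝ᵥ (A⁻¹ * U * A⁻¹) *ᵥ r + r ⬝ᵥ (A⁻¹ * U * A⁻¹) *ᵥ u
        + r ⬝ᵥ (A⁻¹ * U * A⁻¹ * U * A⁻¹) *ᵥ r)) 0 := by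
  set N := fun t : ℝ => (A + t • U)⁻¹
  have hN : ∀ s, (A + s • U).det ≠ 0 → HasDerivAt N (-(N s * U * N s)) s := fun s hs =>
    (hasDerivAt_matrix_add_smul A U s).matrix_inv hs
  have hr : ∀ s, HasDerivAt (fun t : ℝ => r - t • u) (-u) s := fun s => by
    simpa using ((hasDerivAt_id s).smul_const u).const_sub r
  refine ⟨fun s => -(u ⬝ᵥ N s *ᵥ (r - s • u)) - (r - s • u) ⬝ᵥ (N s * U * N s) *ᵥ (r - s • u)
    - (r - s • u) ⬝ᵥ N s *ᵥ u, ?_, ?_⟩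
  · filter_upwards [eventually_det_add_smul_ne_zero hA U] with s hs
    refine ((hr s).dotProduct ((hN s hs).mulVec (hr s))).congr_deriv ?_
    simp only [Matrix.neg_mulVec, mulVec_neg, neg_dotProduct, dotProduct_neg, dotProduct_add]
    ring
  · have h0 := hN 0 (by simpa using hA)
    have hNUN := (h0.matrix_mul_const U).matrix_mul h0
    have hu := hasDerivAt_const (0 : ℝ) u
    have := ((hu.dotProduct (h0.mulVec (hr 0))).neg.sub
      ((hr 0).dotProduct (hNUN.mulVec (hr 0)))).sub ((hr 0).dotProduct (h0.mulVec hu))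
    refine this.congr_deriv ?_
    simp only [N, zero_smul, add_zero, sub_zero, Matrix.neg_mul, Matrix.mul_neg,
      Matrix.neg_mulVec, mulVec_neg, Matrix.add_mulVec, mulVec_zero, zero_dotProduct,
      neg_dotProduct, dotProduct_neg, dotProduct_add, Matrix.mul_assoc]
    ring

theorem gpdf_pos {S : Matrix n n ℝ} (hS : 0 < S.det) (y μ : n → ℝ) : 0 < gpdf y μ S :=
  mul_pos (mul_pos (Real.rpow_pos_of_pos (by positivity) _) (Real.rpow_pos_of_pos hS _))
    (Real.exp_pos _)

theorem log_gpdf {S : Matrix n n ℝ} (hS : 0 < S.det) (y μ : n → ℝ) :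
    Real.log (gpdf y μ S) = Real.log ((2 * Real.pi) ^ (-(Fintype.card n : ℝ) / 2))
      + (-(1 / 2) * Real.log S.det + -(1 / 2) * ((y - μ) ⬝ᵥ S⁻¹ *ᵥ (y - μ))) := by
  have hc : 0 < (2 * Real.pi) ^ (-(Fintype.card n : ℝ) / 2) :=
    Real.rpow_pos_of_pos (by positivity) _
  rw [gpdf, Real.log_mul (mul_pos hc (Real.rpow_pos_of_pos hS _)).ne' (Real.exp_pos _).ne',
    Real.log_mul hc.ne' (Real.rpow_pos_of_pos hS _).ne', Real.log_exp, Real.log_rpow hS]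
  ring

theorem hasSecondDerivAt_log_gpdf_add_smul {S U : Matrix n n ℝ} (hS : S.PosDef) (hU : U.IsSymm)
    {y μ b : n → ℝ} (hb : b = S⁻¹ *ᵥ (y - μ)) (u : n → ℝ) :
    HasSecondDerivAt (fun t : ℝ => Real.log (gpdf y (μ + t • u) (S + t • U)))
      (1 / 2 * (S⁻¹ * U * S⁻¹ * U).trace
        - (u ⬝ᵥ S⁻¹ *ᵥ u + 2 * (u ⬝ᵥ S⁻¹ *ᵥ (U *ᵥ b)) + (U *ᵥ b) ⬝ᵥ S⁻¹ *ᵥ (U *ᵥ b))) 0 := by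
  have hdet := hS.det_pos
  have hW : S⁻¹.IsSymm := hS.isSymm_inv
  set r := y - μ
  have h := (((hasSecondDerivAt_log_det_add_smul hdet.ne' U).const_mul (-(1 / 2))).add
    ((hasSecondDerivAt_dotProduct_inv_mulVec hdet.ne' U r u).const_mul (-(1 / 2)))).const_add
    (Real.log ((2 * Real.pi) ^ (-(Fintype.card n : ℝ) / 2)))
  have hr : ∀ t : ℝ, y - (μ + t • u) = r - t • u := fun t => by
    simp only [r]
    abel
  have e1 : u ⬝ᵥ (S⁻¹ * U * S⁻¹) *ᵥ r = u ⬝ᵥ S⁻¹ *ᵥ (U *ᵥ b) := by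
    rw [hb, ← mulVec_mulVec, ← mulVec_mulVec]
  have e2 : r ⬝ᵥ (S⁻¹ * U * S⁻¹) *ᵥ u = u ⬝ᵥ S⁻¹ *ᵥ (U *ᵥ b) := by
    rw [← mulVec_mulVec, ← mulVec_mulVec, hW.dotProduct_mulVec, ← hb, hU.dotProduct_mulVec,
      dotProduct_comm, hW.dotProduct_mulVec]
  have e3 : r ⬝ᵥ (S⁻¹ * U * S⁻¹ * U * S⁻¹) *ᵥ r = (U *ᵥ b) ⬝ᵥ S⁻¹ *ᵥ (U *ᵥ b) := by
    rw [← mulVec_mulVec, ← mulVec_mulVec, ← mulVec_mulVec, ← mulVec_mulVec, hW.dotProduct_mulVec,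
      ← hb, hU.dotProduct_mulVec]
  rw [e1, e2, e3] at h
  refine (h.congr_of_eventuallyEq ?_).congr_value (by ring)
  filter_upwards [eventually_det_add_smul_pos hdet U] with t ht
  rw [log_gpdf ht, hr]

end GaussianDensity

theorem piFull_pos {K : ℕ} {p : Fin K → ℝ} (hp : ∀ j, 0 < p j) (hps : ∑ j, p j < 1)
    (k : Fin (K + 1)) : 0 < piFull p k := by
  unfold piFull
  split
  · exact hp _
  · linarith

theorem piFull_add_smul {K : ℕ} {p : Fin K → ℝ} {k : Fin (K + 1)} (hk : piFull p k ≠ 0)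
    (q : Fin K → ℝ) (t : ℝ) :
    piFull (p + t • q) k = piFull p k * (1 + t * (avec p k ⬝ᵥ q)) := by
  by_cases h : (k : ℕ) < K
  · simp only [piFull, avec, dif_pos h] at hk ⊢
    simp only [Pi.add_apply, Pi.smul_apply, smul_eq_mul, dotProduct, ite_mul, zero_mul,
      Finset.sum_ite_eq', Finset.mem_univ, ↓reduceIte]
    field_simp
  · simp only [piFull, avec, dif_neg h] at hk ⊢
    simp only [Pi.add_apply, Pi.smul_apply, smul_eq_mul, Finset.sum_add_distrib,
      ← Finset.mul_sum, dotProduct]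
    field_simp
    ring

section Vectorization

variable {D : ℕ}

theorem unvech_isSymm (v : lowIdx D → ℝ) : (unvech v).IsSymm := by
  refine IsSymm.ext fun i j => ?_
  simp only [unvech, of_apply]
  split_ifs with h1 h2 h2
  · obtain rfl := le_antisymm h1 h2
    rfl
  · rfl
  · rfl
  · exact absurd (le_of_not_ge h1) h2

theorem dup_mulVec (v : lowIdx D → ℝ) : dup D *ᵥ v = vec (unvech v) := by
  rw [← (unvech_isSymm v).eq]
  ext ⟨i, j⟩
  simp only [mulVec, dotProduct, dup, of_apply, vec, transpose_apply, unvech, ite_mul, one_mul,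
    zero_mul]
  by_cases h : j ≤ i
  · rw [Finset.sum_eq_single (⟨(i, j), h⟩ : lowIdx D)]
    · simp [h]
    · rintro ⟨⟨a, b⟩, hab⟩ - hne
      refine if_neg ?_
      rintro (⟨rfl, rfl⟩ | ⟨rfl, rfl⟩)
      · exact hne rfl
      · exact hne (Subtype.ext (Prod.ext (le_antisymm h hab) (le_antisymm hab h)))
    · simp
  · rw [Finset.sum_eq_single (⟨(j, i), le_of_not_ge h⟩ : lowIdx D)]
    · simp [h]
    · rintro ⟨⟨a, b⟩, hab⟩ - hne
      refine if_neg ?_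
      rintro (⟨rfl, rfl⟩ | ⟨rfl, rfl⟩)
      · exact h hab
      · exact hne rfl
    · simp

theorem kronRow_mulVec_vec (b : Fin D → ℝ) (A V : Matrix (Fin D) (Fin D) ℝ) :
    kronRow b A *ᵥ vec V = A *ᵥ (V *ᵥ b) := by
  ext i
  simp only [mulVec, dotProduct, kronRow, of_apply, vec, Fintype.sum_prod_type, Finset.mul_sum]
  rw [Finset.sum_comm]
  exact Finset.sum_congr rfl fun _ _ => Finset.sum_congr rfl fun _ _ => by ring

theorem dotProduct_dup_kronecker_mulVec (v : lowIdx D → ℝ) (Q W : Matrix (Fin D) (Fin D) ℝ) :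
    v ⬝ᵥ ((dup D)ᵀ * (Q ⊗ₖ W) * dup D) *ᵥ v = (unvech v * (W * unvech v * Qᵀ)).trace := by
  rw [← mulVec_mulVec, dotProduct_mul_mulVec, transpose_transpose, dup_mulVec,
    kronecker_mulVec_vec, vec_dotProduct_vec, (unvech_isSymm v).eq]

end Vectorization

theorem quadForms_X_F_C_eq {D P : ℕ} {W Bm : Matrix (Fin D) (Fin D) ℝ} (hW : W.IsSymm)
    {b : Fin D → ℝ} (hBm : Bm = W - vecMulVec b b) (X : Matrix (Fin P) (Fin D) ℝ)
    {F : Matrix (Fin D) (Fin D ⊕ lowIdx D) ℝ} (hF : F = fromCols W (kronRow b W * dup D))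
    {C : Matrix (Fin D ⊕ lowIdx D) (Fin D ⊕ lowIdx D) ℝ}
    (hC : C = fromBlocks W (kronRow b W * dup D) ((dup D)ᵀ * (kronRow b W)ᵀ)
      ((1 / 2 : ℝ) • ((dup D)ᵀ * ((W - (2 : ℝ) • Bm) ⊗ₖ W) * dup D)))
    (dβ : Fin P → ℝ) (dl : Fin D → ℝ) (dv : lowIdx D → ℝ) :
    dβ ⬝ᵥ ((X * W * Xᵀ) *ᵥ dβ) + Sum.elim dl dv ⬝ᵥ ((Fᵀ * Xᵀ) *ᵥ dβ)
        + dβ ⬝ᵥ ((X * F) *ᵥ Sum.elim dl dv) + Sum.elim dl dv ⬝ᵥ (C *ᵥ Sum.elim dl dv)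
      = (dl + Xᵀ *ᵥ dβ) ⬝ᵥ W *ᵥ (dl + Xᵀ *ᵥ dβ)
        + 2 * ((dl + Xᵀ *ᵥ dβ) ⬝ᵥ W *ᵥ (unvech dv *ᵥ b))
        + (unvech dv *ᵥ b) ⬝ᵥ W *ᵥ (unvech dv *ᵥ b)
        - 1 / 2 * (W * unvech dv * W * unvech dv).trace := by
  set U := unvech dv with hUdef
  set w := Xᵀ *ᵥ dβ
  set z := U *ᵥ b
  have hU : U.IsSymm := unvech_isSymm dv
  have hK : (kronRow b W * dup D) *ᵥ dv = W *ᵥ z := by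
    rw [← mulVec_mulVec, dup_mulVec, kronRow_mulVec_vec]
  have hFθ : F *ᵥ Sum.elim dl dv = W *ᵥ dl + W *ᵥ z := by
    rw [hF, fromCols_mulVec_sumElim, hK]
  have hXWX : dβ ⬝ᵥ (X * W * Xᵀ) *ᵥ dβ = w ⬝ᵥ W *ᵥ w := by
    rw [Matrix.mul_assoc, dotProduct_mul_mulVec, ← mulVec_mulVec]
  have hFX : Sum.elim dl dv ⬝ᵥ (Fᵀ * Xᵀ) *ᵥ dβ = w ⬝ᵥ (W *ᵥ dl + W *ᵥ z) := by
    rw [dotProduct_mul_mulVec, transpose_transpose, hFθ, dotProduct_comm]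
  have hXF : dβ ⬝ᵥ (X * F) *ᵥ Sum.elim dl dv = w ⬝ᵥ (W *ᵥ dl + W *ᵥ z) := by
    rw [dotProduct_mul_mulVec, hFθ]
  have hbb : (U * (W * U * vecMulVec b b)).trace = z ⬝ᵥ W *ᵥ z := by
    rw [← Matrix.mul_assoc, mul_vecMulVec, trace_vecMulVec, ← mulVec_mulVec, ← mulVec_mulVec,
      dotProduct_comm, hU.dotProduct_mulVec]
  have hQ : dv ⬝ᵥ ((1 / 2 : ℝ) • ((dup D)ᵀ * ((W - (2 : ℝ) • Bm) ⊗ₖ W) * dup D)) *ᵥ dv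
      = z ⬝ᵥ W *ᵥ z - 1 / 2 * (W * U * W * U).trace := by
    have hM : (W - (2 : ℝ) • Bm)ᵀ = (2 : ℝ) • vecMulVec b b - W := by
      rw [hBm, transpose_sub, transpose_smul, transpose_sub, transpose_vecMulVec, hW.eq]
      module
    rw [smul_mulVec, dotProduct_smul, dotProduct_dup_kronecker_mulVec, hM, Matrix.mul_sub,
      Matrix.mul_sub, Matrix.mul_smul, Matrix.mul_smul, trace_sub, trace_smul, hbb,
      trace_mul_comm U]
    simp only [← hUdef, smul_eq_mul]
    ring
  have hCθ : Sum.elim dl dv ⬝ᵥ C *ᵥ Sum.elim dl dv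
      = dl ⬝ᵥ W *ᵥ dl + 2 * (dl ⬝ᵥ W *ᵥ z) + (z ⬝ᵥ W *ᵥ z - 1 / 2 * (W * U * W * U).trace) := by
    rw [hC, ← transpose_mul, sumElim_dotProduct_fromBlocks_mulVec, hK, hQ]
  rw [hXWX, hFX, hXF, hCθ]
  simp only [mulVec_add, add_dotProduct, dotProduct_add]
  rw [hW.dotProduct_mulVec dl w, dotProduct_comm (W *ᵥ dl) w]
  ring

/-- second differential of `ln f_{ki}`:
`d² ln f_{ki} = −(dπ)'a_k a_k' dπ − (dβ)'XᵢΣₖ⁻¹Xᵢ' dβ − (dθ_k)'F_{ki}'Xᵢ' dβ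
 − (dβ)'XᵢF_{ki} dθ_k − (dθ_k)'C_{ki} dθ_k` (here `K+1` components, `K` free weights). -/
theorem stmt_19 (D P K I : ℕ) (p : Fin K → ℝ)
    (hp : ∀ j, 0 < p j) (hps : ∑ j, p j < 1)
    (lam : Fin (K + 1) → Fin D → ℝ)
    (S : Fin (K + 1) → Matrix (Fin D) (Fin D) ℝ) (hS : ∀ k', (S k').PosDef)
    (β : Fin P → ℝ) (X : Fin I → Matrix (Fin P) (Fin D) ℝ) (y : Fin I → Fin D → ℝ)
    (k : Fin (K + 1)) (i : Fin I)
    (b : Fin D → ℝ) (hb : b = (S k)⁻¹ *ᵥ (y i - (lam k + (X i)ᵀ *ᵥ β)))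
    (Bm : Matrix (Fin D) (Fin D) ℝ) (hBm : Bm = (S k)⁻¹ - vecMulVec b b)
    (F : Matrix (Fin D) (Fin D ⊕ lowIdx D) ℝ)
    (hF : F = Matrix.fromCols (S k)⁻¹ (kronRow b (S k)⁻¹ * dup D))
    (C : Matrix (Fin D ⊕ lowIdx D) (Fin D ⊕ lowIdx D) ℝ)
    (hC : C = Matrix.fromBlocks (S k)⁻¹ (kronRow b (S k)⁻¹ * dup D)
      ((dup D)ᵀ * (kronRow b (S k)⁻¹)ᵀ)
      ((1 / 2 : ℝ) • ((dup D)ᵀ * (((S k)⁻¹ - (2 : ℝ) • Bm) ⊗ₖ (S k)⁻¹) * dup D)))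
    (dπ : Fin K → ℝ) (dβ : Fin P → ℝ) (dl : Fin D → ℝ) (dv : lowIdx D → ℝ) :
    iteratedDeriv 2 (fun t : ℝ =>
        Real.log (piFull (p + t • dπ) k *
          gpdf (y i) ((lam k + t • dl) + (X i)ᵀ *ᵥ (β + t • dβ)) (S k + t • unvech dv))) 0 =
      -(avec p k ⬝ᵥ dπ) ^ 2
        - dβ ⬝ᵥ ((X i * (S k)⁻¹ * (X i)ᵀ) *ᵥ dβ)
        - Sum.elim dl dv ⬝ᵥ ((Fᵀ * (X i)ᵀ) *ᵥ dβ)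
        - dβ ⬝ᵥ ((X i * F) *ᵥ Sum.elim dl dv)
        - Sum.elim dl dv ⬝ᵥ (C *ᵥ Sum.elim dl dv) := by
  have hπ : piFull p k ≠ 0 := (piFull_pos hp hps k).ne'
  have hmean : ∀ t : ℝ, (lam k + t • dl) + (X i)ᵀ *ᵥ (β + t • dβ)
      = (lam k + (X i)ᵀ *ᵥ β) + t • (dl + (X i)ᵀ *ᵥ dβ) := fun t => by
    rw [mulVec_add, mulVec_smul, smul_add]
    abel
  have hd2 := (hasSecondDerivAt_log_mul_one_add hπ (avec p k ⬝ᵥ dπ)).add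
    (hasSecondDerivAt_log_gpdf_add_smul (hS k) (unvech_isSymm dv) hb (dl + (X i)ᵀ *ᵥ dβ))
  rw [(hd2.congr_of_eventuallyEq ?_).iteratedDeriv_two_eq]
  · linarith [quadForms_X_F_C_eq (hS k).isSymm_inv hBm (X i) hF hC dβ dl dv]
  · filter_upwards [eventually_one_add_mul_ne_zero (avec p k ⬝ᵥ dπ),
      eventually_det_add_smul_pos (hS k).det_pos (unvech dv)] with t ht hdet
    rw [piFull_add_smul hπ, hmean, Real.log_mul (mul_ne_zero hπ ht) (gpdf_pos hdet _ _).ne']
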